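/- (Theorem 2, exponential form) Let θ ≥ 1 and let d, d̂ be real numbers satisfying σ(d̂) = q_θ(d), where σ(x) = 1/(1 + exp(−x)) and q_θ(d) = p_θ(d) + t_θ(d)/2. Then exp(d̂ − d) = (2θ + (1 + θ²)·exp(−d)) / (1 + θ² + 2θ·exp(−d)). -/

import Mathlib

open Real

noncomputable def pBTT (θ d : ℝ) : ℝ := 1 / (1 + θ * Real.exp (-d))

noncomputable def tBTT (θ d : ℝ) : ℝ :=
  (θ ^ 2 - 1) * Real.exp d / ((Real.exp d + θ) * (θ * Real.exp d + 1))

noncomputable def qBTT (θ d : ℝ) : ℝ := pBTT θ d + tBTT θ d / 2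

noncomputable def logistic (x : ℝ) : ℝ := 1 / (1 + Real.exp (-x))

/-! Writing `E = exp d`, the tie-broken win probability is
`q = E (θ² + 1 + 2θE) / (2 (E + θ)(θE + 1))` and `1 - q = ((1 + θ²) E + 2θ) / (2 (E + θ)(θE + 1))`.
As `σ(d̂) = q` means `exp d̂ = q / (1 - q)`, the common denominator cancels, and dividing by `E`
gives the claimed form of `exp (d̂ - d)`. -/

lemma logistic_eq_sigmoid : logistic = sigmoid := by
  funext x
  rw [logistic, sigmoid_def, one_div]

lemma exp_eq_div_one_sub_of_logistic_eq {x q : ℝ} (h : logistic x = q) :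
    exp x = q / (1 - q) := by
  rw [← h, logistic_eq_sigmoid, ← sigmoid_neg, ← sigmoid_mul_rexp_neg,
    div_mul_cancel_left₀ (sigmoid_pos x).ne', exp_neg, inv_inv]

section BTT

variable {θ : ℝ} (d : ℝ)

lemma qBTT_eq (hθ : 0 ≤ θ) :
    qBTT θ d = exp d * (θ ^ 2 + 1 + 2 * θ * exp d) / (2 * ((exp d + θ) * (θ * exp d + 1))) := by
  have hE := exp_pos d
  rw [qBTT, pBTT, tBTT, exp_neg]
  field_simp
  ring

lemma one_sub_qBTT (hθ : 0 ≤ θ) :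
    1 - qBTT θ d = ((1 + θ ^ 2) * exp d + 2 * θ) / (2 * ((exp d + θ) * (θ * exp d + 1))) := by
  have hE := exp_pos d
  rw [qBTT_eq d hθ]
  field_simp
  ring

lemma qBTT_div_one_sub_qBTT (hθ : 0 ≤ θ) :
    qBTT θ d / (1 - qBTT θ d) =
      exp d * (θ ^ 2 + 1 + 2 * θ * exp d) / ((1 + θ ^ 2) * exp d + 2 * θ) := by
  have hE := exp_pos d
  rw [one_sub_qBTT d hθ, qBTT_eq d hθ, div_div_div_cancel_right₀ (by positivity)]

end BTT

theorem bias_exponential_form (θ d dhat : ℝ) (hθ : 1 ≤ θ)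
    (h : logistic dhat = qBTT θ d) :
    Real.exp (dhat - d) =
      (2 * θ + (1 + θ ^ 2) * Real.exp (-d)) / (1 + θ ^ 2 + 2 * θ * Real.exp (-d)) := by
  have hθ₀ : 0 ≤ θ := zero_le_one.trans hθ
  have hE := exp_pos d
  calc exp (dhat - d) = exp dhat / exp d := exp_sub dhat d
    _ = exp d * (θ ^ 2 + 1 + 2 * θ * exp d) / ((1 + θ ^ 2) * exp d + 2 * θ) / exp d := by
      rw [exp_eq_div_one_sub_of_logistic_eq h, qBTT_div_one_sub_qBTT d hθ₀]
    _ = (2 * θ + (1 + θ ^ 2) * exp (-d)) / (1 + θ ^ 2 + 2 * θ * exp (-d)) := by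
      rw [exp_neg]
      field_simp
      ring
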